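/- (Lemma C.5) For any input x and any parameter vectors θ₁, θ₂ ∈ ℝ^K, the noisy QNN outputs satisfy |f_{θ₁}(x) − f_{θ₂}(x)| ≤ (1−p)^{K_g} · √K · ‖O‖ · ‖θ₁ − θ₂‖₂. -/

import Mathlib

open scoped Matrix Matrix.Norms.L2Operator ComplexOrder
open Finset

noncomputable section

/-- The rotation gate `e^{-i θ P / 2}` generated by a matrix `P`. -/
def rotGate {N : ℕ} (P : Matrix (Fin (2^N)) (Fin (2^N)) ℂ) (θ : ℝ) :
    Matrix (Fin (2^N)) (Fin (2^N)) ℂ :=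
  NormedSpace.exp ((-(θ / 2 : ℂ) * Complex.I) • P)

/-- The parameterized circuit `U(θ) = V₁ e^{-iθ₁P₁/2} V₂ ⋯ V_K e^{-iθ_K P_K/2} V_{K+1}`. -/
def circuit {N K : ℕ} (V : Fin (K + 1) → Matrix (Fin (2^N)) (Fin (2^N)) ℂ)
    (P : Fin K → Matrix (Fin (2^N)) (Fin (2^N)) ℂ) (θ : EuclideanSpace ℝ (Fin K)) :
    Matrix (Fin (2^N)) (Fin (2^N)) ℂ :=
  (List.ofFn fun k : Fin K => V k.castSucc * rotGate (P k) (θ k)).prod * V (Fin.last K)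

/-- QNN output `f_θ(x) = Tr(O U(θ) ρ(x) U(θ)†)` (a real number). -/
def qnnOut {N K : ℕ} (V : Fin (K + 1) → Matrix (Fin (2^N)) (Fin (2^N)) ℂ)
    (P : Fin K → Matrix (Fin (2^N)) (Fin (2^N)) ℂ)
    (O ρ : Matrix (Fin (2^N)) (Fin (2^N)) ℂ) (θ : EuclideanSpace ℝ (Fin K)) : ℝ :=
  ((O * circuit V P θ * ρ * (circuit V P θ)ᴴ).trace).re

/-- Parameter-shift gradient of the QNN output, as a vector in `ℝ^K`. -/
def qnnGrad {N K : ℕ} (V : Fin (K + 1) → Matrix (Fin (2^N)) (Fin (2^N)) ℂ)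
    (P : Fin K → Matrix (Fin (2^N)) (Fin (2^N)) ℂ)
    (O ρ : Matrix (Fin (2^N)) (Fin (2^N)) ℂ) (θ : EuclideanSpace ℝ (Fin K)) :
    EuclideanSpace ℝ (Fin K) :=
  (WithLp.equiv 2 (Fin K → ℝ)).symm fun j =>
    (qnnOut V P O ρ (θ + (Real.pi / 2) • EuclideanSpace.single j 1)
      - qnnOut V P O ρ (θ - (Real.pi / 2) • EuclideanSpace.single j 1)) / 2


/-- Noisy QNN output under depolarizing noise of level `p` applied to each of the `Kg`
gates: `f_θ(x) = (1−p)^{K_g} Tr(O U(θ) ρ(x) U(θ)†) + (1 − (1−p)^{K_g}) Tr(O)/2^N`. -/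
def qnnOutNoisy {N K : ℕ} (p : ℝ) (Kg : ℕ)
    (V : Fin (K + 1) → Matrix (Fin (2^N)) (Fin (2^N)) ℂ)
    (P : Fin K → Matrix (Fin (2^N)) (Fin (2^N)) ℂ)
    (O ρ : Matrix (Fin (2^N)) (Fin (2^N)) ℂ) (θ : EuclideanSpace ℝ (Fin K)) : ℝ :=
  (1 - p) ^ Kg * qnnOut V P O ρ θ + (1 - (1 - p) ^ Kg) * (O.trace.re / 2 ^ N)


theorem exp_smul_of_mul_self_eq_one {A : Type*} [NormedRing A] [NormedAlgebra ℂ A]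
    (a : A) (ha : a * a = 1) (z : ℂ) :
    NormedSpace.exp (z • a) = Complex.cosh z • (1 : A) + Complex.sinh z • a := by
  rw [NormedSpace.exp_eq_tsum (𝕂 := ℂ)]
  refine HasSum.tsum_eq (HasSum.even_add_odd ?_ ?_)
  · have h := (Complex.hasSum_cosh z).smul_const (1 : A)
    convert h using 2 with k
    have hak : a ^ (2 * k) = 1 := by rw [pow_mul, pow_two, ha, one_pow]
    rw [smul_pow, hak, smul_smul]
    congr 1
    rw [div_eq_mul_inv, mul_comm]
  · have h := (Complex.hasSum_sinh z).smul_const a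
    convert h using 2 with k
    have hak : a ^ (2 * k) = 1 := by rw [pow_mul, pow_two, ha, one_pow]
    have hak' : a ^ (2 * k + 1) = a := by rw [pow_succ, hak, one_mul]
    rw [smul_pow, hak', smul_smul]
    congr 1
    rw [div_eq_mul_inv, mul_comm]

section MatrixAux

variable {m : Type*} [Fintype m] [DecidableEq m]

/-- product of elements of the algebra generated by an involution `P`. -/
theorem comb_mul (P : Matrix m m ℂ) (hP : P * P = 1) (x y z w : ℂ) :
    (x • (1 : Matrix m m ℂ) + y • P) * (z • (1 : Matrix m m ℂ) + w • P)
      = (x * z + y * w) • (1 : Matrix m m ℂ) + (x * w + y * z) • P := by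
  simp only [add_mul, mul_add, smul_mul_assoc, mul_smul_comm, smul_smul, one_mul, mul_one, hP]
  module

theorem comb_conjTranspose (P : Matrix m m ℂ) (hH : Pᴴ = P) (x y : ℂ) :
    (x • (1 : Matrix m m ℂ) + y • P)ᴴ
      = (starRingEnd ℂ x) • (1 : Matrix m m ℂ) + (starRingEnd ℂ y) • P := by
  simp [Matrix.conjTranspose_add, Matrix.conjTranspose_smul, hH]

end MatrixAux

theorem rotGate_eq {N : ℕ} (P : Matrix (Fin (2^N)) (Fin (2^N)) ℂ) (hP : P * P = 1) (θ : ℝ) :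
    rotGate P θ = (Real.cos (θ/2) : ℂ) • (1 : Matrix (Fin (2^N)) (Fin (2^N)) ℂ)
      + (-(Real.sin (θ/2) : ℂ) * Complex.I) • P := by
  have hz : (-(θ / 2 : ℂ) * Complex.I) = ((-(θ/2) : ℝ) : ℂ) * Complex.I := by push_cast; ring
  rw [rotGate, hz, exp_smul_of_mul_self_eq_one P hP]
  rw [Complex.cosh_mul_I, Complex.sinh_mul_I, ← Complex.ofReal_cos, ← Complex.ofReal_sin,
    Real.cos_neg, Real.sin_neg]
  push_cast
  ring_nf


theorem rotGate_mem {N : ℕ} (P : Matrix (Fin (2^N)) (Fin (2^N)) ℂ)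
    (hH : Pᴴ = P) (hP : P * P = 1) (θ : ℝ) :
    rotGate P θ ∈ Matrix.unitaryGroup (Fin (2^N)) ℂ := by
  rw [Matrix.mem_unitaryGroup_iff', Matrix.star_eq_conjTranspose, rotGate_eq P hP,
    comb_conjTranspose P hH, comb_mul P hP]
  have h1 : starRingEnd ℂ ((Real.cos (θ/2) : ℂ)) * (Real.cos (θ/2) : ℂ)
      + starRingEnd ℂ (-(Real.sin (θ/2) : ℂ) * Complex.I) * (-(Real.sin (θ/2) : ℂ) * Complex.I)
      = 1 := by
    have h := Real.sin_sq_add_cos_sq (θ/2)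
    simp only [map_mul, map_neg, Complex.conj_ofReal, Complex.conj_I]
    have : ((Real.sin (θ/2) : ℂ))^2 + ((Real.cos (θ/2) : ℂ))^2 = 1 := by
      rw [← Complex.ofReal_pow, ← Complex.ofReal_pow, ← Complex.ofReal_add, h,
        Complex.ofReal_one]
    linear_combination this - ((Real.sin (θ/2) : ℂ))^2 * Complex.I_sq
  have h2 : starRingEnd ℂ ((Real.cos (θ/2) : ℂ)) * (-(Real.sin (θ/2) : ℂ) * Complex.I)
      + starRingEnd ℂ (-(Real.sin (θ/2) : ℂ) * Complex.I) * (Real.cos (θ/2) : ℂ) = 0 := by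
    simp only [map_mul, map_neg, Complex.conj_ofReal, Complex.conj_I]
    ring
  rw [h1, h2, one_smul, zero_smul, add_zero]

theorem norm_sq_comb {N : ℕ} (P : Matrix (Fin (2^N)) (Fin (2^N)) ℂ)
    (hH : Pᴴ = P) (hP : P * P = 1) (x y : ℝ) :
    ‖(x:ℂ) • (1 : Matrix (Fin (2^N)) (Fin (2^N)) ℂ) + (-(y:ℂ) * Complex.I) • P‖
      * ‖(x:ℂ) • (1 : Matrix (Fin (2^N)) (Fin (2^N)) ℂ) + (-(y:ℂ) * Complex.I) • P‖
      = x^2 + y^2 := by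
  haveI : Nonempty (Fin (2^N)) := ⟨⟨0, Nat.two_pow_pos N⟩⟩
  set D := (x:ℂ) • (1 : Matrix (Fin (2^N)) (Fin (2^N)) ℂ) + (-(y:ℂ) * Complex.I) • P with hDdef
  have hstar : Dᴴ * D = (((x^2 + y^2 : ℝ)) : ℂ) • (1 : Matrix (Fin (2^N)) (Fin (2^N)) ℂ) := by
    rw [hDdef, comb_conjTranspose P hH, comb_mul P hP]
    have h2 : starRingEnd ℂ ((x:ℂ)) * (x:ℂ)
        + starRingEnd ℂ (-(y:ℂ) * Complex.I) * (-(y:ℂ) * Complex.I)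
        = (((x^2 + y^2 : ℝ)) : ℂ) := by
      simp only [map_mul, map_neg, Complex.conj_ofReal, Complex.conj_I]
      push_cast
      linear_combination - ((y:ℂ))^2 * Complex.I_sq
    have h3 : starRingEnd ℂ ((x:ℂ)) * (-(y:ℂ) * Complex.I)
        + starRingEnd ℂ (-(y:ℂ) * Complex.I) * (x:ℂ) = 0 := by
      simp only [map_mul, map_neg, Complex.conj_ofReal, Complex.conj_I]
      ring
    rw [h2, h3, zero_smul, add_zero]
  rw [← CStarRing.norm_star_mul_self, Matrix.star_eq_conjTranspose, hstar, norm_smul,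
    CStarRing.norm_one, mul_one, Complex.norm_real, Real.norm_eq_abs, abs_of_nonneg]
  positivity

theorem rotGate_sub_norm {N : ℕ} (P : Matrix (Fin (2^N)) (Fin (2^N)) ℂ)
    (hH : Pᴴ = P) (hP : P * P = 1) (a b : ℝ) :
    ‖rotGate P a - rotGate P b‖ ≤ |a - b| / 2 := by
  have hD : rotGate P a - rotGate P b
      = ((Real.cos (a/2) - Real.cos (b/2) : ℝ) : ℂ)
          • (1 : Matrix (Fin (2^N)) (Fin (2^N)) ℂ)
        + (-((Real.sin (a/2) - Real.sin (b/2) : ℝ) : ℂ) * Complex.I) • P := by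
    rw [rotGate_eq P hP, rotGate_eq P hP, Complex.ofReal_sub, Complex.ofReal_sub]
    module
  have hnorm2 := norm_sq_comb P hH hP (Real.cos (a/2) - Real.cos (b/2))
    (Real.sin (a/2) - Real.sin (b/2))
  rw [← hD] at hnorm2
  have hrle : (Real.cos (a/2) - Real.cos (b/2))^2 + (Real.sin (a/2) - Real.sin (b/2))^2
      ≤ ((a - b)/2)^2 := by
    have e1 := Real.cos_sub_cos (a/2) (b/2)
    have e2 := Real.sin_sub_sin (a/2) (b/2)
    have e3 := Real.sin_sq_add_cos_sq ((a/2 + b/2)/2)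
    have e4 : |Real.sin ((a/2 - b/2)/2)| ≤ |(a/2 - b/2)/2| := Real.abs_sin_le_abs
    have e5 : Real.sin ((a/2 - b/2)/2)^2 ≤ ((a/2 - b/2)/2)^2 := by
      rw [← sq_abs, ← sq_abs ((a/2 - b/2)/2)]
      exact pow_le_pow_left₀ (abs_nonneg _) e4 2
    rw [e1, e2]
    nlinarith [e3, e5]
  have h0 : (0:ℝ) ≤ |a - b| / 2 := by positivity
  nlinarith [norm_nonneg (rotGate P a - rotGate P b), sq_abs (a - b), hnorm2, hrle]


open scoped MatrixOrder in
theorem norm_trace_mul_le {m : Type*} [Fintype m] [DecidableEq m]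
    (A ρ : Matrix m m ℂ) (hρ : ρ.PosSemidef) :
    ‖(A * ρ).trace‖ ≤ ‖A‖ * ρ.trace.re := by
  set s := CFC.sqrt ρ with hsdef
  have hmul : s * s = ρ := CFC.sqrt_mul_sqrt_self ρ hρ.nonneg
  have hsH : sᴴ = s := (Matrix.nonneg_iff_posSemidef.mp (CFC.sqrt_nonneg ρ)).isHermitian
  set x : m → EuclideanSpace ℂ m := fun i => (WithLp.equiv 2 (m → ℂ)).symm (fun j => s j i)
    with hx
  have hentry : ∀ i j, s i j = starRingEnd ℂ (s j i) := by
    intro i j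
    conv_lhs => rw [← hsH]
    simp [Matrix.conjTranspose_apply]
  have happ : ∀ i j, x i j = s j i := by
    intro i j
    simp [hx, WithLp.equiv_symm_apply]
  have htr : (A * ρ).trace = ∑ i, (inner ℂ (x i)
      ((EuclideanSpace.equiv m ℂ).symm (A *ᵥ x i)) : ℂ) := by
    conv_lhs => rw [← hmul, ← mul_assoc]
    rw [Matrix.trace_mul_comm, Matrix.trace]
    refine Finset.sum_congr rfl fun i _ => ?_
    rw [PiLp.inner_apply]
    refine Finset.sum_congr rfl fun j _ => ?_
    rw [RCLike.inner_apply]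
    show s i j * (A * s) j i = _
    rw [hentry i j, happ i j, mul_comm]
    congr 1
  have hnormsq : ∀ i, ‖x i‖^2 = ∑ j, Complex.normSq (s j i) := by
    intro i
    rw [EuclideanSpace.norm_eq, Real.sq_sqrt (by positivity)]
    refine Finset.sum_congr rfl fun j _ => ?_
    rw [happ i j, ← Complex.sq_norm]
  have hsum : ∑ i, ‖x i‖^2 = ρ.trace.re := by
    have h1 : ρ.trace = ∑ i, ∑ j, (Complex.normSq (s j i) : ℂ) := by
      conv_lhs => rw [← hmul]
      rw [Matrix.trace]
      refine Finset.sum_congr rfl fun i _ => ?_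
      rw [Matrix.diag_apply, Matrix.mul_apply]
      refine Finset.sum_congr rfl fun j _ => ?_
      rw [hentry i j, mul_comm, Complex.mul_conj]
    rw [h1]
    rw [Complex.re_sum]
    refine Finset.sum_congr rfl fun i _ => ?_
    rw [hnormsq i, Complex.re_sum]
    simp
  calc ‖(A * ρ).trace‖ ≤ ∑ i, ‖(inner ℂ (x i)
        ((EuclideanSpace.equiv m ℂ).symm (A *ᵥ x i)) : ℂ)‖ := by
        rw [htr]; exact norm_sum_le _ _
    _ ≤ ∑ i, ‖A‖ * ‖x i‖^2 := by
        refine Finset.sum_le_sum fun i _ => ?_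
        calc ‖(inner ℂ (x i) ((EuclideanSpace.equiv m ℂ).symm (A *ᵥ x i)) : ℂ)‖
            ≤ ‖x i‖ * ‖(EuclideanSpace.equiv m ℂ).symm (A *ᵥ x i)‖ := norm_inner_le_norm _ _
          _ ≤ ‖x i‖ * (‖A‖ * ‖x i‖) := by
              refine mul_le_mul_of_nonneg_left ?_ (norm_nonneg _)
              exact Matrix.l2_opNorm_mulVec A (x i)
          _ = ‖A‖ * ‖x i‖^2 := by ring
    _ = ‖A‖ * ρ.trace.re := by rw [← Finset.mul_sum, hsum]


theorem norm_one_of_unitary {N : ℕ} {U : Matrix (Fin (2^N)) (Fin (2^N)) ℂ}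
    (hU : U ∈ Matrix.unitaryGroup (Fin (2^N)) ℂ) : ‖U‖ = 1 := by
  haveI : Nonempty (Fin (2^N)) := ⟨⟨0, Nat.two_pow_pos N⟩⟩
  exact CStarRing.norm_of_mem_unitary hU

theorem re_trace_sub_le {N : ℕ} (O ρ U₁ U₂ : Matrix (Fin (2^N)) (Fin (2^N)) ℂ)
    (hU₁ : U₁ ∈ Matrix.unitaryGroup (Fin (2^N)) ℂ)
    (hU₂ : U₂ ∈ Matrix.unitaryGroup (Fin (2^N)) ℂ)
    (hρ : ρ.PosSemidef) (hρtr : ρ.trace = 1) :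
    |((O * U₁ * ρ * U₁ᴴ).trace).re - ((O * U₂ * ρ * U₂ᴴ).trace).re|
      ≤ 2 * ‖O‖ * ‖U₁ - U₂‖ := by
  have hnU₁ : ‖U₁‖ = 1 := norm_one_of_unitary hU₁
  have hnU₂ : ‖U₂‖ = 1 := norm_one_of_unitary hU₂
  have hnU₁H : ‖U₁ᴴ‖ = 1 := by rw [Matrix.l2_opNorm_conjTranspose]; exact hnU₁
  set D := U₁ - U₂ with hDdef
  have hsplit : O * U₁ * ρ * U₁ᴴ - O * U₂ * ρ * U₂ᴴ
      = O * D * ρ * U₁ᴴ + O * U₂ * ρ * Dᴴ := by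
    rw [hDdef, Matrix.conjTranspose_sub]
    noncomm_ring
  have htr1 : (O * D * ρ * U₁ᴴ).trace = ((U₁ᴴ * (O * D)) * ρ).trace := by
    rw [Matrix.trace_mul_comm (O * D * ρ) U₁ᴴ]
    simp only [mul_assoc]
  have htr2 : (O * U₂ * ρ * Dᴴ).trace = ((Dᴴ * (O * U₂)) * ρ).trace := by
    rw [Matrix.trace_mul_comm (O * U₂ * ρ) Dᴴ]
    simp only [mul_assoc]
  have hb1 : ‖(O * D * ρ * U₁ᴴ).trace‖ ≤ ‖O‖ * ‖D‖ := by
    rw [htr1]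
    calc ‖((U₁ᴴ * (O * D)) * ρ).trace‖ ≤ ‖U₁ᴴ * (O * D)‖ * ρ.trace.re :=
          norm_trace_mul_le _ _ hρ
      _ = ‖U₁ᴴ * (O * D)‖ := by rw [hρtr]; simp
      _ ≤ ‖U₁ᴴ‖ * ‖O * D‖ := Matrix.l2_opNorm_mul _ _
      _ = ‖O * D‖ := by rw [hnU₁H, one_mul]
      _ ≤ ‖O‖ * ‖D‖ := Matrix.l2_opNorm_mul _ _
  have hb2 : ‖(O * U₂ * ρ * Dᴴ).trace‖ ≤ ‖O‖ * ‖D‖ := by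
    rw [htr2]
    calc ‖((Dᴴ * (O * U₂)) * ρ).trace‖ ≤ ‖Dᴴ * (O * U₂)‖ * ρ.trace.re :=
          norm_trace_mul_le _ _ hρ
      _ = ‖Dᴴ * (O * U₂)‖ := by rw [hρtr]; simp
      _ ≤ ‖Dᴴ‖ * ‖O * U₂‖ := Matrix.l2_opNorm_mul _ _
      _ ≤ ‖Dᴴ‖ * (‖O‖ * ‖U₂‖) := by
          refine mul_le_mul_of_nonneg_left (Matrix.l2_opNorm_mul _ _) (norm_nonneg _)
      _ = ‖O‖ * ‖D‖ := by rw [Matrix.l2_opNorm_conjTranspose, hnU₂, mul_one, mul_comm]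
  have hkey : ((O * U₁ * ρ * U₁ᴴ).trace).re - ((O * U₂ * ρ * U₂ᴴ).trace).re
      = (((O * D * ρ * U₁ᴴ).trace) + ((O * U₂ * ρ * Dᴴ).trace)).re := by
    rw [← Complex.sub_re, ← Matrix.trace_sub, ← Matrix.trace_add, hsplit]
  rw [hkey]
  calc |(((O * D * ρ * U₁ᴴ).trace) + ((O * U₂ * ρ * Dᴴ).trace)).re|
      ≤ ‖((O * D * ρ * U₁ᴴ).trace) + ((O * U₂ * ρ * Dᴴ).trace)‖ := by
        exact Complex.abs_re_le_norm _
    _ ≤ ‖(O * D * ρ * U₁ᴴ).trace‖ + ‖(O * U₂ * ρ * Dᴴ).trace‖ := norm_add_le _ _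
    _ ≤ ‖O‖ * ‖D‖ + ‖O‖ * ‖D‖ := add_le_add hb1 hb2
    _ = 2 * ‖O‖ * ‖D‖ := by ring

theorem circuit_mem_unitary {N K : ℕ} (V : Fin (K + 1) → Matrix (Fin (2^N)) (Fin (2^N)) ℂ)
    (P : Fin K → Matrix (Fin (2^N)) (Fin (2^N)) ℂ)
    (hV : ∀ k, V k ∈ Matrix.unitaryGroup (Fin (2^N)) ℂ)
    (hPH : ∀ k, (P k)ᴴ = P k) (hPsq : ∀ k, P k * P k = 1)
    (θ : EuclideanSpace ℝ (Fin K)) :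
    circuit V P θ ∈ Matrix.unitaryGroup (Fin (2^N)) ℂ := by
  refine mul_mem (Submonoid.list_prod_mem _ ?_) (hV _)
  intro A hA
  rw [List.mem_ofFn] at hA
  obtain ⟨k, rfl⟩ := hA
  exact mul_mem (hV _) (rotGate_mem (P k) (hPH k) (hPsq k) (θ k))

theorem circuit_succ {N K : ℕ} (V : Fin (K + 2) → Matrix (Fin (2^N)) (Fin (2^N)) ℂ)
    (P : Fin (K + 1) → Matrix (Fin (2^N)) (Fin (2^N)) ℂ)
    (θ : EuclideanSpace ℝ (Fin (K + 1))) :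
    circuit V P θ = (V 0 * rotGate (P 0) (θ 0))
      * circuit (fun k => V k.succ) (fun k => P k.succ)
          ((WithLp.equiv 2 (Fin K → ℝ)).symm (fun k => θ k.succ)) := by
  unfold circuit
  rw [List.ofFn_succ, List.prod_cons, mul_assoc]
  simp [Fin.succ_last, WithLp.equiv_symm_apply]

theorem circuit_sub_le {N : ℕ} : ∀ (K : ℕ)
    (V : Fin (K + 1) → Matrix (Fin (2^N)) (Fin (2^N)) ℂ)
    (P : Fin K → Matrix (Fin (2^N)) (Fin (2^N)) ℂ),
    (∀ k, V k ∈ Matrix.unitaryGroup (Fin (2^N)) ℂ) →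
    (∀ k, (P k)ᴴ = P k) → (∀ k, P k * P k = 1) →
    ∀ (θ₁ θ₂ : EuclideanSpace ℝ (Fin K)),
    ‖circuit V P θ₁ - circuit V P θ₂‖ ≤ ∑ k, |θ₁ k - θ₂ k| / 2 := by
  intro K
  induction K with
  | zero =>
    intro V P hV hPH hPsq θ₁ θ₂
    simp [circuit]
  | succ K ih =>
    intro V P hV hPH hPsq θ₁ θ₂
    rw [circuit_succ, circuit_succ]
    set A₁ := V 0 * rotGate (P 0) (θ₁ 0) with hA₁
    set A₂ := V 0 * rotGate (P 0) (θ₂ 0) with hA₂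
    set B₁ := circuit (fun k => V k.succ) (fun k => P k.succ)
      ((WithLp.equiv 2 (Fin K → ℝ)).symm (fun k => θ₁ k.succ)) with hB₁
    set B₂ := circuit (fun k => V k.succ) (fun k => P k.succ)
      ((WithLp.equiv 2 (Fin K → ℝ)).symm (fun k => θ₂ k.succ)) with hB₂
    have hBu : B₁ ∈ Matrix.unitaryGroup (Fin (2^N)) ℂ :=
      circuit_mem_unitary _ _ (fun k => hV _) (fun k => hPH _) (fun k => hPsq _) _
    have hAu : A₂ ∈ Matrix.unitaryGroup (Fin (2^N)) ℂ :=
      mul_mem (hV 0) (rotGate_mem (P 0) (hPH 0) (hPsq 0) (θ₂ 0))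
    have hsplit : A₁ * B₁ - A₂ * B₂ = (A₁ - A₂) * B₁ + A₂ * (B₁ - B₂) := by noncomm_ring
    have hA : ‖A₁ - A₂‖ ≤ |θ₁ 0 - θ₂ 0| / 2 := by
      have : A₁ - A₂ = V 0 * (rotGate (P 0) (θ₁ 0) - rotGate (P 0) (θ₂ 0)) := by
        rw [hA₁, hA₂, mul_sub]
      rw [this]
      calc ‖V 0 * (rotGate (P 0) (θ₁ 0) - rotGate (P 0) (θ₂ 0))‖
          ≤ ‖V 0‖ * ‖rotGate (P 0) (θ₁ 0) - rotGate (P 0) (θ₂ 0)‖ := Matrix.l2_opNorm_mul _ _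
        _ = ‖rotGate (P 0) (θ₁ 0) - rotGate (P 0) (θ₂ 0)‖ := by
            rw [norm_one_of_unitary (hV 0), one_mul]
        _ ≤ |θ₁ 0 - θ₂ 0| / 2 := rotGate_sub_norm _ (hPH 0) (hPsq 0) _ _
    have hB : ‖B₁ - B₂‖ ≤ ∑ k : Fin K, |θ₁ k.succ - θ₂ k.succ| / 2 := by
      have h := ih (fun k => V k.succ) (fun k => P k.succ) (fun k => hV _) (fun k => hPH _)
        (fun k => hPsq _) ((WithLp.equiv 2 (Fin K → ℝ)).symm (fun k => θ₁ k.succ))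
        ((WithLp.equiv 2 (Fin K → ℝ)).symm (fun k => θ₂ k.succ))
      simpa [hB₁, hB₂, WithLp.equiv_symm_apply] using h
    calc ‖A₁ * B₁ - A₂ * B₂‖ = ‖(A₁ - A₂) * B₁ + A₂ * (B₁ - B₂)‖ := by rw [hsplit]
      _ ≤ ‖(A₁ - A₂) * B₁‖ + ‖A₂ * (B₁ - B₂)‖ := norm_add_le _ _
      _ ≤ ‖A₁ - A₂‖ * ‖B₁‖ + ‖A₂‖ * ‖B₁ - B₂‖ :=
          add_le_add (Matrix.l2_opNorm_mul _ _) (Matrix.l2_opNorm_mul _ _)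
      _ = ‖A₁ - A₂‖ + ‖B₁ - B₂‖ := by
          rw [norm_one_of_unitary hBu, norm_one_of_unitary hAu, mul_one, one_mul]
      _ ≤ |θ₁ 0 - θ₂ 0| / 2 + ∑ k : Fin K, |θ₁ k.succ - θ₂ k.succ| / 2 := add_le_add hA hB
      _ = ∑ k, |θ₁ k - θ₂ k| / 2 := by
          rw [Fin.sum_univ_succ (f := fun k : Fin (K+1) => |θ₁ k - θ₂ k| / 2)]

/-- Lemma C.5: the noisy QNN output satisfies
`|f_{θ₁}(x) − f_{θ₂}(x)| ≤ (1−p)^{K_g} √K ‖O‖ ‖θ₁ − θ₂‖₂`. -/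

theorem qnnOutNoisy_lipschitz {N K : ℕ} (p : ℝ) (hp : p ∈ Set.Icc (0 : ℝ) 1) (Kg : ℕ)
    (V : Fin (K + 1) → Matrix (Fin (2^N)) (Fin (2^N)) ℂ)
    (hV : ∀ k, V k ∈ Matrix.unitaryGroup (Fin (2^N)) ℂ)
    (P : Fin K → Matrix (Fin (2^N)) (Fin (2^N)) ℂ)
    (hPH : ∀ k, (P k).IsHermitian)
    (hPU : ∀ k, P k ∈ Matrix.unitaryGroup (Fin (2^N)) ℂ)
    (O ρ : Matrix (Fin (2^N)) (Fin (2^N)) ℂ)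
    (hO : O.IsHermitian) (hρ : ρ.PosSemidef) (hρtr : ρ.trace = 1)
    (θ₁ θ₂ : EuclideanSpace ℝ (Fin K)) :
    |qnnOutNoisy p Kg V P O ρ θ₁ - qnnOutNoisy p Kg V P O ρ θ₂|
      ≤ (1 - p) ^ Kg * Real.sqrt K * ‖O‖ * ‖θ₁ - θ₂‖ := by
  obtain ⟨hp0, hp1⟩ := hp
  have hPHe : ∀ k, (P k)ᴴ = P k := fun k => hPH k
  have hPsq : ∀ k, P k * P k = 1 := fun k => by
    have h := (Matrix.mem_unitaryGroup_iff').mp (hPU k)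
    rwa [Matrix.star_eq_conjTranspose, hPHe k] at h
  have hU₁ := circuit_mem_unitary V P hV hPHe hPsq θ₁
  have hU₂ := circuit_mem_unitary V P hV hPHe hPsq θ₂
  have h1 : |qnnOut V P O ρ θ₁ - qnnOut V P O ρ θ₂|
      ≤ 2 * ‖O‖ * ‖circuit V P θ₁ - circuit V P θ₂‖ := by
    simpa [qnnOut] using
      re_trace_sub_le O ρ (circuit V P θ₁) (circuit V P θ₂) hU₁ hU₂ hρ hρtr
  have h2 := circuit_sub_le K V P hV hPHe hPsq θ₁ θ₂
  have h3 : ∑ k, |θ₁ k - θ₂ k| ≤ Real.sqrt K * ‖θ₁ - θ₂‖ := by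
    have hcs := sum_mul_sq_le_sq_mul_sq univ (fun _ : Fin K => (1:ℝ)) (fun k => |θ₁ k - θ₂ k|)
    simp only [one_mul, one_pow] at hcs
    have hnorm : ‖θ₁ - θ₂‖ = Real.sqrt (∑ k, |θ₁ k - θ₂ k|^2) := by
      rw [EuclideanSpace.norm_eq]
      congr 1
    calc ∑ k, |θ₁ k - θ₂ k| = Real.sqrt ((∑ k, |θ₁ k - θ₂ k|)^2) :=
          (Real.sqrt_sq (by positivity)).symm
      _ ≤ Real.sqrt ((K:ℝ) * ∑ k, |θ₁ k - θ₂ k|^2) := by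
          refine Real.sqrt_le_sqrt ?_
          calc (∑ k, |θ₁ k - θ₂ k|)^2 ≤ (∑ _k : Fin K, (1:ℝ)) * ∑ k, |θ₁ k - θ₂ k|^2 := hcs
            _ = (K:ℝ) * ∑ k, |θ₁ k - θ₂ k|^2 := by simp [Finset.card_univ]
      _ = Real.sqrt K * Real.sqrt (∑ k, |θ₁ k - θ₂ k|^2) :=
          Real.sqrt_mul (by positivity) _
      _ = Real.sqrt K * ‖θ₁ - θ₂‖ := by rw [hnorm]
  have hdiff : qnnOutNoisy p Kg V P O ρ θ₁ - qnnOutNoisy p Kg V P O ρ θ₂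
      = (1 - p)^Kg * (qnnOut V P O ρ θ₁ - qnnOut V P O ρ θ₂) := by
    unfold qnnOutNoisy; ring
  have hc : (0:ℝ) ≤ (1-p)^Kg := pow_nonneg (by linarith) _
  rw [hdiff, abs_mul, abs_of_nonneg hc]
  have hsum2 : ∑ k, |θ₁ k - θ₂ k| / 2 = (∑ k, |θ₁ k - θ₂ k|) / 2 := by rw [Finset.sum_div]
  calc (1-p)^Kg * |qnnOut V P O ρ θ₁ - qnnOut V P O ρ θ₂|
      ≤ (1-p)^Kg * (2 * ‖O‖ * ‖circuit V P θ₁ - circuit V P θ₂‖) :=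
        mul_le_mul_of_nonneg_left h1 hc
    _ ≤ (1-p)^Kg * (2 * ‖O‖ * ((∑ k, |θ₁ k - θ₂ k|) / 2)) := by
        refine mul_le_mul_of_nonneg_left ?_ hc
        refine mul_le_mul_of_nonneg_left ?_ (by positivity)
        rw [← hsum2]; exact h2
    _ = (1-p)^Kg * (‖O‖ * ∑ k, |θ₁ k - θ₂ k|) := by ring
    _ ≤ (1-p)^Kg * (‖O‖ * (Real.sqrt K * ‖θ₁ - θ₂‖)) :=
        mul_le_mul_of_nonneg_left (mul_le_mul_of_nonneg_left h3 (norm_nonneg _)) hc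
    _ = (1 - p) ^ Kg * Real.sqrt K * ‖O‖ * ‖θ₁ - θ₂‖ := by ring

end
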